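/- Let p ≥ 5 be a prime and G = SL₂(ℤ/pℤ). Let μ : G → ℝ be nonnegative and symmetric, i.e. μ(g⁻¹) = μ(g) for all g ∈ G, and let T : ℓ²(G) → ℓ²(G) be the convolution operator Tφ = μ ∗ φ. Then every eigenvalue λ of the restriction of T to the space of mean-zero functions on G satisfies |λ| ≤ √(2/(p−1)) · ‖μ‖₂ · |G|^{1/2}, where ‖μ‖₂ = (Σ_{g∈G} μ(g)²)^{1/2}. -/

import Mathlib

/-!
Right translations commute with `φ ↦ μ ∗ φ`. Expanding a mean-zero eigenfunction in Fourier
series along the upper unipotent subgroup `U ≅ ℤ/p`, acting on the right, therefore produces an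
eigenfunction on which `U` acts through a nontrivial character `j ↦ e(jk/p)`: if all nontrivial
coefficients of all right translates vanished, the eigenfunction would be invariant under every
conjugate of `U`; these generate `SL₂(𝔽_p)`, so it would be constant, hence zero. Right
translation by `diag(t⁻¹, t)` turns the character `k` into `t²k`, so the eigenspace contains
pairwise orthogonal vectors for at least `(p - 1)/2` distinct characters. Bessel's inequality
against the rows `y ↦ μ(xy⁻¹)` of the convolution matrix, summed over `x`, then gives
`λ² (p - 1)/2 ≤ |G| ‖μ‖₂²`.
-/

open Finset

/-- Convolution of a real weight with a complex-valued function on a finite group: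
`(μ ∗ φ)(x) = Σ_g μ(g) φ(g⁻¹ x)`. -/
noncomputable def convR {G : Type*} [Group G] [Fintype G] (μ : G → ℝ) (φ : G → ℂ) : G → ℂ :=
  fun x => ∑ g : G, (μ g : ℂ) * φ (g⁻¹ * x)

open scoped MatrixGroups

section Convolution

variable {G : Type*} [Group G] [Fintype G] (μ : G → ℝ)

def IsConvEigenfunction (lam : ℝ) (ψ : G → ℂ) : Prop :=
  ψ ≠ 0 ∧ convR μ ψ = fun x => (lam : ℂ) * ψ x

lemma convR_comp_mul_right (φ : G → ℂ) (a : G) :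
    convR μ (fun x => φ (x * a)) = fun x => convR μ φ (x * a) := by
  funext x
  simp only [convR, mul_assoc]

lemma convR_smul (a : ℂ) (φ : G → ℂ) : convR μ (a • φ) = a • convR μ φ := by
  funext x
  simp only [convR, Pi.smul_apply, smul_eq_mul, mul_sum]
  exact sum_congr rfl fun g _ => by ring

noncomputable def convRow (x : G) : EuclideanSpace ℂ G :=
  WithLp.toLp 2 fun y => (μ (x * y⁻¹) : ℂ)

lemma inner_convRow (x : G) (φ : EuclideanSpace ℂ G) :
    inner ℂ (convRow μ x) φ = convR μ φ x := by
  rw [PiLp.inner_apply]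
  refine Fintype.sum_equiv ((Equiv.inv G).trans (Equiv.mulLeft x)) _ _ fun y => ?_
  simp [convRow, mul_assoc, mul_comm]

lemma norm_convRow_sq (x : G) : ‖convRow μ x‖ ^ 2 = ∑ g : G, μ g ^ 2 := by
  rw [EuclideanSpace.norm_sq_eq]
  refine Fintype.sum_equiv ((Equiv.inv G).trans (Equiv.mulLeft x)) _ _ fun y => ?_
  simp [convRow]

variable {μ} {lam : ℝ}

lemma IsConvEigenfunction.comp_mul_right {ψ : G → ℂ} (hψ : IsConvEigenfunction μ lam ψ) (a : G) :
    IsConvEigenfunction μ lam fun x => ψ (x * a) := by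
  refine ⟨fun h => hψ.1 (funext fun y => ?_), ?_⟩
  · simpa using congrFun h (y * a⁻¹)
  · rw [convR_comp_mul_right, hψ.2]

theorem sq_mul_card_le_of_orthonormal {ι : Type*} [Fintype ι] {v : ι → EuclideanSpace ℂ G}
    (hv : Orthonormal ℂ v) (heig : ∀ i, convR μ (v i) = fun x => (lam : ℂ) * v i x) :
    lam ^ 2 * Fintype.card ι ≤ Fintype.card G * ∑ g : G, μ g ^ 2 := by
  have bessel (x : G) : ∑ i, lam ^ 2 * ‖v i x‖ ^ 2 ≤ ∑ g : G, μ g ^ 2 := by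
    rw [← norm_convRow_sq μ x]
    refine le_of_eq_of_le (sum_congr rfl fun i _ => ?_)
      (hv.sum_inner_products_le (convRow μ x) (s := univ))
    rw [← norm_inner_symm, inner_convRow, heig, norm_mul, mul_pow, Complex.norm_real,
      Real.norm_eq_abs, sq_abs]
  calc lam ^ 2 * Fintype.card ι = ∑ i, ∑ x, lam ^ 2 * ‖v i x‖ ^ 2 := by
        simp only [← mul_sum, ← EuclideanSpace.norm_sq_eq, hv.1, one_pow, mul_one,
          sum_const, card_univ, nsmul_eq_mul, mul_comm]
    _ = ∑ x, ∑ i, lam ^ 2 * ‖v i x‖ ^ 2 := sum_comm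
    _ ≤ ∑ _x : G, ∑ g : G, μ g ^ 2 := sum_le_sum fun x _ => bessel x
    _ = Fintype.card G * ∑ g : G, μ g ^ 2 := by simp

lemma inner_toLp_eq_zero_of_mul_right_eq_smul {u : G} {c c' : ℂ} (hc : ‖c‖ = 1) (hcc' : c ≠ c')
    {ψ ψ' : G → ℂ} (hψ : ∀ x, ψ (x * u) = c * ψ x) (hψ' : ∀ x, ψ' (x * u) = c' * ψ' x) :
    inner ℂ (WithLp.toLp 2 ψ : EuclideanSpace ℂ G) (WithLp.toLp 2 ψ') = 0 := by
  set I := inner ℂ (WithLp.toLp 2 ψ : EuclideanSpace ℂ G) (WithLp.toLp 2 ψ')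
  have hI : I = (starRingEnd ℂ) c * c' * I := by
    simp only [I, PiLp.inner_apply, mul_sum]
    refine (Fintype.sum_equiv (Equiv.mulRight u) _ _ fun x => ?_).symm
    simp only [Equiv.coe_mulRight, RCLike.inner_apply, hψ, hψ', map_mul]
    ring
  rw [← Complex.inv_eq_conj hc] at hI
  have hne : c⁻¹ * c' - 1 ≠ 0 := by
    rw [sub_ne_zero, Ne, inv_mul_eq_one₀ (norm_ne_zero_iff.mp (hc ▸ one_ne_zero))]
    exact hcc'
  exact (mul_eq_zero.mp (by linear_combination -hI : (c⁻¹ * c' - 1) * I = 0)).resolve_left hne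

theorem sq_mul_card_le_of_mul_right_eq_smul {ι : Type*} [Fintype ι] (u : G) {c : ι → ℂ}
    (hc : Function.Injective c) (hc1 : ∀ i, ‖c i‖ = 1)
    (hψ : ∀ i, ∃ ψ : G → ℂ, IsConvEigenfunction μ lam ψ ∧ ∀ x, ψ (x * u) = c i * ψ x) :
    lam ^ 2 * Fintype.card ι ≤ Fintype.card G * ∑ g : G, μ g ^ 2 := by
  choose ψ hψ hψu using hψ
  let w i : EuclideanSpace ℂ G := WithLp.toLp 2 (ψ i)
  have hw0 i : w i ≠ 0 := fun h => (hψ i).1 (congrArg WithLp.ofLp h)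
  refine sq_mul_card_le_of_orthonormal (v := fun i => ((‖w i‖ : ℂ)⁻¹) • w i)
    ⟨fun i => norm_smul_inv_norm (hw0 i), fun i j hij => ?_⟩ fun i => ?_
  · dsimp only
    rw [inner_smul_left, inner_smul_right,
      inner_toLp_eq_zero_of_mul_right_eq_smul (hc1 i) (hc.ne hij) (hψu i) (hψu j), mul_zero,
      mul_zero]
  · have hcoe : ⇑(((‖w i‖ : ℂ)⁻¹) • w i) = ((‖w i‖ : ℂ)⁻¹) • ψ i := rfl
    rw [hcoe, convR_smul, (hψ i).2]
    funext x
    simp only [Pi.smul_apply, smul_eq_mul]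
    ring

end Convolution

lemma ZMod.apply_eq_apply_of_dft_eq_zero {N : ℕ} [NeZero N] {E : Type*} [AddCommGroup E]
    [Module ℂ E] {Φ : ZMod N → E} (h : ∀ k ≠ 0, ZMod.dft Φ k = 0) (i j : ZMod N) :
    Φ i = Φ j := by
  have hconst (i : ZMod N) : Φ i = (N : ℂ)⁻¹ • ZMod.dft Φ 0 := by
    rw [← ZMod.dft.symm_apply_apply Φ, ZMod.invDFT_apply,
      sum_eq_single 0 (fun k _ hk => by rw [h k hk, smul_zero]) (by simp)]
    simp
  rw [hconst i, hconst j]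

section RightFourier

variable {G : Type*} [Group G] {N : ℕ} [NeZero N] (u : AddChar (ZMod N) G)

noncomputable def rightFourier (φ : G → ℂ) (k : ZMod N) (x : G) : ℂ :=
  ZMod.dft (fun j => φ (x * u j)) k

lemma convR_rightFourier [Fintype G] (μ : G → ℝ) (φ : G → ℂ) (k : ZMod N) :
    convR μ (rightFourier u φ k) = rightFourier u (convR μ φ) k := by
  funext x
  simp only [convR, rightFourier, ZMod.dft_apply, smul_eq_mul, mul_sum]
  rw [sum_comm]
  refine sum_congr rfl fun j _ => sum_congr rfl fun g _ => ?_
  rw [mul_assoc]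
  ring

lemma rightFourier_const_mul (c : ℂ) (φ : G → ℂ) (k : ZMod N) :
    rightFourier u (fun x => c * φ x) k = fun x => c * rightFourier u φ k x := by
  funext x
  simp only [rightFourier, ZMod.dft_apply, smul_eq_mul, mul_sum]
  exact sum_congr rfl fun j _ => by ring

lemma rightFourier_mul_apply (φ : G → ℂ) (k : ZMod N) (x : G) (i : ZMod N) :
    rightFourier u φ k (x * u i) = ZMod.stdAddChar (i * k) * rightFourier u φ k x := by
  simp only [rightFourier, ZMod.dft_apply, smul_eq_mul, mul_sum, mul_assoc,
    ← AddChar.map_add_eq_mul]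
  refine Fintype.sum_equiv (Equiv.addLeft i) _ _ fun j => ?_
  simp only [Equiv.coe_addLeft, ← mul_assoc, ← AddChar.map_add_eq_mul]
  ring_nf

lemma mul_right_eq_of_rightFourier_eq_zero {φ : G → ℂ} {x : G}
    (h : ∀ k ≠ 0, rightFourier u φ k x = 0) (i : ZMod N) : φ (x * u i) = φ x := by
  simpa using ZMod.apply_eq_apply_of_dft_eq_zero h i 0

end RightFourier

section SL2

open Matrix.SpecialLinearGroup

def upperTransvection (F : Type*) [CommRing F] : AddChar F SL(2, F) where
  toFun b := transvection zero_ne_one b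
  map_zero_eq_one' := transvection_coeff_zero _
  map_add_eq_mul' := transvection_add _

lemma coe_upperTransvection {F : Type*} [CommRing F] (b : F) :
    (upperTransvection F b : Matrix (Fin 2) (Fin 2) F) = !![1, b; 0, 1] := by
  ext i j
  fin_cases i <;> fin_cases j <;> simp [upperTransvection, transvection_coe]

variable {F : Type*} [Field F]

lemma exists_transvection_one_zero_eq_conj (c : F) :
    ∃ w : SL(2, F), transvection one_ne_zero c = w * upperTransvection F (-c) * w⁻¹ := by
  refine ⟨⟨!![0, -1; 1, 0], by simp [Matrix.det_fin_two_of]⟩, eq_mul_inv_iff_mul_eq.mpr ?_⟩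
  refine Subtype.ext ?_
  change ((transvection one_ne_zero c : SL(2, F)) : Matrix (Fin 2) (Fin 2) F) * !![0, -1; 1, 0] =
    !![0, -1; 1, 0] * (upperTransvection F (-c) : Matrix (Fin 2) (Fin 2) F)
  rw [coe_upperTransvection, transvection_coe]
  ext i j
  fin_cases i <;> fin_cases j <;> simp [Matrix.mul_apply, Fin.sum_univ_two]

theorem SL2.induction_on_conj_upperTransvection {P : SL(2, F) → Prop}
    (hconj : ∀ g b, P (g * upperTransvection F b * g⁻¹))
    (hmul : ∀ A B, P A → P B → P (A * B)) (A : SL(2, F)) : P A := by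
  refine Matrix.SL2.transvection_induction P (fun i j hij c => ?_) hmul A
  fin_cases i
  · obtain rfl : j = 1 := by fin_cases j <;> tauto
    have h := hconj 1 c
    rwa [one_mul, inv_one, mul_one] at h
  · obtain rfl : j = 0 := by fin_cases j <;> tauto
    obtain ⟨w, hw⟩ := exists_transvection_one_zero_eq_conj c
    exact hw ▸ hconj w (-c)

lemma upperTransvection_mul_diag2_inv {a : F} (ha : a ≠ 0) (b : F) :
    upperTransvection F b * diag2 a⁻¹ (inv_ne_zero ha) =
      diag2 a⁻¹ (inv_ne_zero ha) * upperTransvection F (a ^ 2 * b) := by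
  ext i j
  fin_cases i <;> fin_cases j <;> simp [coe_upperTransvection, diag2_coe']
  field_simp

end SL2

lemma card_units_le_two_mul_card_image_sq_mul {R : Type*} [CommRing R] [NoZeroDivisors R]
    [Fintype Rˣ] [DecidableEq R] {k : R} (hk : k ≠ 0) :
    Fintype.card Rˣ ≤ 2 * #(univ.image fun t : Rˣ => (t : R) ^ 2 * k) := by
  refine Finset.card_le_mul_card_image _ 2 fun b hb => ?_
  obtain ⟨t₀, -, rfl⟩ := mem_image.mp hb
  calc #(univ.filter fun t : Rˣ => (t : R) ^ 2 * k = (t₀ : R) ^ 2 * k) ≤ #{t₀, -t₀} := by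
        refine card_le_card fun t ht => ?_
        have hsq := mul_right_cancel₀ hk (mem_filter.mp ht).2
        rcases sq_eq_sq_iff_eq_or_eq_neg.mp hsq with h | h
        · simp [Units.ext h]
        · simp [Units.ext (h.trans (Units.val_neg t₀).symm)]
    _ ≤ 2 := card_le_two

section Eigenfunctions

open Matrix.SpecialLinearGroup

variable {p : ℕ} [Fact p.Prime] {μ : SL(2, ZMod p) → ℝ} {lam : ℝ}

lemma eq_zero_of_rightFourier_eq_zero {φ : SL(2, ZMod p) → ℂ} (hsum : ∑ x, φ x = 0)
    (h : ∀ a k, k ≠ 0 → rightFourier (upperTransvection (ZMod p)) (fun x => φ (x * a)) k = 0) :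
    φ = 0 := by
  have hinv : ∀ g y, φ (g * y) = φ y := by
    refine SL2.induction_on_conj_upperTransvection (fun g b y => ?_)
      fun A B hA hB y => by rw [mul_assoc, hA, hB]
    have := mul_right_eq_of_rightFourier_eq_zero _
      (fun k hk => congrFun (h (g⁻¹ * y) k hk) g) b
    simpa [mul_assoc] using this
  have hconst (x) : φ x = φ 1 := by simpa using hinv x 1
  have hcard : (Fintype.card SL(2, ZMod p) : ℂ) * φ 1 = 0 := by
    rw [← hsum]
    simp [hconst]
  funext x
  rw [hconst, Pi.zero_apply]
  exact (mul_eq_zero.mp hcard).resolve_left (by exact_mod_cast Fintype.card_ne_zero)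

lemma exists_eigenfunction_upperTransvection_character {φ : SL(2, ZMod p) → ℂ}
    (hφ : IsConvEigenfunction μ lam φ) (hsum : ∑ x, φ x = 0) :
    ∃ k ≠ 0, ∃ w : SL(2, ZMod p) → ℂ, IsConvEigenfunction μ lam w ∧
      ∀ x i, w (x * upperTransvection (ZMod p) i) = ZMod.stdAddChar (i * k) * w x := by
  obtain ⟨a, k, hk, hw⟩ : ∃ a k, k ≠ 0 ∧
      rightFourier (upperTransvection (ZMod p)) (fun x => φ (x * a)) k ≠ 0 := by
    by_contra! h
    exact hφ.1 (eq_zero_of_rightFourier_eq_zero hsum h)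
  refine ⟨k, hk, _, ⟨hw, ?_⟩, rightFourier_mul_apply _ _ k⟩
  rw [convR_rightFourier, (hφ.comp_mul_right a).2, rightFourier_const_mul]

lemma exists_eigenfunction_upperTransvection_sq_mul {φ : SL(2, ZMod p) → ℂ}
    (hφ : IsConvEigenfunction μ lam φ) (hsum : ∑ x, φ x = 0) :
    ∃ k ≠ 0, ∀ t : (ZMod p)ˣ, ∃ ψ : SL(2, ZMod p) → ℂ, IsConvEigenfunction μ lam ψ ∧
      ∀ x, ψ (x * upperTransvection (ZMod p) 1) = ZMod.stdAddChar ((t : ZMod p) ^ 2 * k) * ψ x := by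
  obtain ⟨k, hk, w, hw, hwchar⟩ := exists_eigenfunction_upperTransvection_character hφ hsum
  refine ⟨k, hk, fun t => ⟨_, hw.comp_mul_right (diag2 (t : ZMod p)⁻¹ (inv_ne_zero t.ne_zero)),
    fun x => ?_⟩⟩
  rw [mul_assoc, upperTransvection_mul_diag2_inv t.ne_zero, ← mul_assoc, hwchar, mul_one]

end Eigenfunctions

theorem eigenvalue_bound_SL2_Fp_general
    (p : ℕ) [NeZero p] (hp : p.Prime)
    (μ : Matrix.SpecialLinearGroup (Fin 2) (ZMod p) → ℝ)
    (lam : ℝ)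
    (hEig : ∃ φ : Matrix.SpecialLinearGroup (Fin 2) (ZMod p) → ℂ, φ ≠ 0 ∧
      (∑ x : Matrix.SpecialLinearGroup (Fin 2) (ZMod p), φ x) = 0 ∧
      convR μ φ = fun x => (lam : ℂ) * φ x) :
    |lam| ≤ Real.sqrt (2 / ((p : ℝ) - 1)) *
      Real.sqrt (∑ g : Matrix.SpecialLinearGroup (Fin 2) (ZMod p), μ g ^ 2) *
      Real.sqrt (Nat.card (Matrix.SpecialLinearGroup (Fin 2) (ZMod p))) := by
  have : Fact p.Prime := ⟨hp⟩
  obtain ⟨φ, hφ0, hsum, heig⟩ := hEig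
  obtain ⟨k, hk, hψ⟩ := exists_eigenfunction_upperTransvection_sq_mul ⟨hφ0, heig⟩ hsum
  set S := univ.image fun t : (ZMod p)ˣ => (t : ZMod p) ^ 2 * k
  have hmult : lam ^ 2 * #S ≤ Nat.card SL(2, ZMod p) * ∑ g, μ g ^ 2 := by
    simpa using sq_mul_card_le_of_mul_right_eq_smul (ι := S) (upperTransvection (ZMod p) 1)
      (c := fun s => ZMod.stdAddChar (s : ZMod p))
      (ZMod.injective_stdAddChar.comp Subtype.val_injective) (fun s => AddChar.norm_apply _ _)
      fun ⟨s, hs⟩ => by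
        obtain ⟨t, -, rfl⟩ := mem_image.mp hs
        exact hψ t
  have hcard : ((p - 1 : ℕ) : ℝ) ≤ 2 * #S := by
    exact_mod_cast ZMod.card_units p ▸ card_units_le_two_mul_card_image_sq_mul hk
  rw [Nat.cast_sub hp.one_le, Nat.cast_one] at hcard
  have hp1 : (0 : ℝ) < p - 1 := sub_pos.mpr (Nat.one_lt_cast.mpr hp.one_lt)
  rw [← Real.sqrt_mul (by positivity), ← Real.sqrt_mul (by positivity), ← Real.sqrt_sq_eq_abs]
  refine Real.sqrt_le_sqrt ?_
  rw [div_mul_eq_mul_div, div_mul_eq_mul_div, le_div_iff₀ hp1]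
  nlinarith [mul_le_mul_of_nonneg_left hcard (sq_nonneg lam)]

/-- Eigenvalue bound for symmetric convolution operators on `SL₂(𝔽_p)`: if `μ ≥ 0` is
symmetric and `λ` is an eigenvalue of `φ ↦ μ ∗ φ` on the mean-zero functions, then
`|λ| ≤ √(2/(p−1)) ‖μ‖₂ |G|^{1/2}`. -/
theorem eigenvalue_bound_SL2_Fp
    (p : ℕ) [NeZero p] (hp : p.Prime) (hp5 : 5 ≤ p)
    (μ : Matrix.SpecialLinearGroup (Fin 2) (ZMod p) → ℝ)
    (hμnonneg : ∀ g, 0 ≤ μ g)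
    (hμsymm : ∀ g, μ g⁻¹ = μ g)
    (lam : ℝ)
    (hEig : ∃ φ : Matrix.SpecialLinearGroup (Fin 2) (ZMod p) → ℂ, φ ≠ 0 ∧
      (∑ x : Matrix.SpecialLinearGroup (Fin 2) (ZMod p), φ x) = 0 ∧
      convR μ φ = fun x => (lam : ℂ) * φ x) :
    |lam| ≤ Real.sqrt (2 / ((p : ℝ) - 1)) *
      Real.sqrt (∑ g : Matrix.SpecialLinearGroup (Fin 2) (ZMod p), μ g ^ 2) *
      Real.sqrt (Nat.card (Matrix.SpecialLinearGroup (Fin 2) (ZMod p))) :=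
  eigenvalue_bound_SL2_Fp_general p hp μ lam hEig
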